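/- Let μ be a positive Radon measure on the unit disc and K a μ-measurable function such that K and K(w)·log(1-|w|) are μ-integrable. Then the Hausdorff operator (H f)(z) = ∫_𝔻 K(w) f(φ_w(z)) dμ(w) is bounded on the Bloch space 𝓑 (with norm ‖f‖'_𝓑 = ‖f‖_𝓑 + |f(0)|), with operator norm at most ∫_𝔻 |K(w)|·(2 + (1/2)log((1+|w|)/(1-|w|))) dμ(w). -/

import Mathlib

/-!
The Bloch seminorm is Möbius invariant:
`(1 - |z|²) |(f ∘ φ_w)'(z)| = (1 - |φ_w z|²) |f'(φ_w z)|`, so differentiating under the integral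
gives `‖H f‖_𝓑 ≤ ‖f‖_𝓑 ∫ |K|`.

Writing `½ log ((1 + r) / (1 - r)) = artanh r`, comparing `f` with `‖f‖_𝓑 · artanh` along a radius
gives `|f(z)| ≤ |f(0)| + ‖f‖_𝓑 artanh |z|`. As `φ_w 0 = w`, this bounds `|H f (0)|` by
`∫ |K(w)| (|f(0)| + ‖f‖_𝓑 artanh |w|)`. Together with the hyperbolic triangle inequality
`artanh |φ_w z| ≤ artanh |w| + artanh |z|`, the weight `|K| artanh |·|`, integrable because
`K · log (1 - |·|)` is, dominates the integrand at every `z`.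
-/

open Complex Metric Set MeasureTheory

noncomputable def moebius (w z : ℂ) : ℂ := (w - z) / (1 - (starRingEnd ℂ) w * z)

/-- The Bloch seminorm values of `f` over the unit disc. -/
def blochSet (f : ℂ → ℂ) : Set ℝ := (fun z => (1 - ‖z‖ ^ 2) * ‖deriv f z‖) '' ball (0:ℂ) 1

/-- The Bloch norm `‖f‖'_𝓑 = ‖f‖_𝓑 + |f(0)|`. -/
noncomputable def blochNorm' (f : ℂ → ℂ) : ℝ := sSup (blochSet f) + ‖f 0‖

/-- The Hausdorff operator over the unit disc. -/
noncomputable def hausdorffOp (μ : Measure ℂ) (K : ℂ → ℂ) (f : ℂ → ℂ) (z : ℂ) : ℂ :=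
  ∫ w in ball (0:ℂ) 1, K w * f (moebius w z) ∂μ

open ComplexConjugate

theorem one_sub_conj_mul_ne_zero {w z : ℂ} (hw : ‖w‖ < 1) (hz : ‖z‖ < 1) :
    1 - conj w * z ≠ 0 := by
  refine sub_ne_zero.mpr fun h => ?_
  have : ‖conj w * z‖ < 1 := by
    rw [norm_mul, RCLike.norm_conj]
    nlinarith [norm_nonneg w, norm_nonneg z]
  simp [← h] at this

theorem norm_one_sub_conj_mul_le (w z : ℂ) : ‖1 - conj w * z‖ ≤ 1 + ‖w‖ * ‖z‖ := by
  simpa [norm_mul] using norm_sub_le (1 : ℂ) (conj w * z)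

theorem normSq_one_sub_conj_mul_sub_normSq_sub (w z : ℂ) :
    normSq (1 - conj w * z) - normSq (w - z) = (1 - normSq w) * (1 - normSq z) := by
  simp only [normSq_apply, sub_re, sub_im, mul_re, mul_im, one_re, one_im, conj_re, conj_im]
  ring

theorem one_sub_norm_moebius_sq {w z : ℂ} (hw : ‖w‖ < 1) (hz : ‖z‖ < 1) :
    1 - ‖moebius w z‖ ^ 2 = (1 - ‖w‖ ^ 2) * (1 - ‖z‖ ^ 2) / ‖1 - conj w * z‖ ^ 2 := by
  have hd := (normSq_pos.mpr (one_sub_conj_mul_ne_zero hw hz)).ne'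
  simp only [moebius, norm_div, div_pow, Complex.sq_norm]
  rw [eq_div_iff hd, sub_mul, div_mul_cancel₀ _ hd]
  linarith [normSq_one_sub_conj_mul_sub_normSq_sub w z]

theorem norm_moebius_lt_one {w z : ℂ} (hw : ‖w‖ < 1) (hz : ‖z‖ < 1) : ‖moebius w z‖ < 1 := by
  have hd := one_sub_conj_mul_ne_zero hw hz
  have hw₂ : 0 < 1 - ‖w‖ ^ 2 := by nlinarith [norm_nonneg w]
  have hz₂ : 0 < 1 - ‖z‖ ^ 2 := by nlinarith [norm_nonneg z]
  have hpos : 0 < 1 - ‖moebius w z‖ ^ 2 := by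
    rw [one_sub_norm_moebius_sq hw hz]
    positivity
  nlinarith [norm_nonneg (moebius w z)]

theorem moebius_mem_ball {w z : ℂ} (hw : w ∈ ball (0 : ℂ) 1) (hz : z ∈ ball (0 : ℂ) 1) :
    moebius w z ∈ ball (0 : ℂ) 1 := by
  rw [mem_ball_zero_iff] at *
  exact norm_moebius_lt_one hw hz

theorem moebius_zero_right (w : ℂ) : moebius w 0 = w := by
  simp [moebius]

theorem norm_moebius_le {w z : ℂ} (hw : ‖w‖ < 1) (hz : ‖z‖ < 1) :
    ‖moebius w z‖ ≤ (‖w‖ + ‖z‖) / (1 + ‖w‖ * ‖z‖) := by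
  have hden : ‖1 - conj w * z‖ ≠ 0 := norm_ne_zero_iff.mpr (one_sub_conj_mul_ne_zero hw hz)
  have h : (1 - ‖moebius w z‖ ^ 2) * ‖1 - conj w * z‖ ^ 2 =
      (1 - ‖w‖ ^ 2) * (1 - ‖z‖ ^ 2) := by
    rw [one_sub_norm_moebius_sq hw hz, div_mul_cancel₀ _ (pow_ne_zero 2 hden)]
  have hd : ‖1 - conj w * z‖ ^ 2 ≤ (1 + ‖w‖ * ‖z‖) ^ 2 :=
    pow_le_pow_left₀ (norm_nonneg _) (norm_one_sub_conj_mul_le w z) 2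
  have hρ : 0 ≤ 1 - ‖moebius w z‖ ^ 2 := by
    nlinarith [norm_moebius_lt_one hw hz, norm_nonneg (moebius w z)]
  have ha := norm_nonneg w
  have hb := norm_nonneg z
  rw [le_div_iff₀ (by positivity)]
  refine (pow_le_pow_iff_left₀ (by positivity) (by positivity) two_ne_zero).mp ?_
  nlinarith [mul_nonneg hρ (sub_nonneg.mpr hd)]

theorem Real.artanh_add {a b : ℝ} (ha : a ∈ Ioo (-1) 1) (hb : b ∈ Ioo (-1) 1) :
    Real.artanh a + Real.artanh b = Real.artanh ((a + b) / (1 + a * b)) := by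
  obtain ⟨ha₁, ha₂⟩ := ha
  obtain ⟨hb₁, hb₂⟩ := hb
  have hab : 0 < 1 + a * b := by nlinarith
  have hs : (a + b) / (1 + a * b) ∈ Icc (-1) 1 := by
    constructor
    · rw [le_div_iff₀ hab]; nlinarith
    · rw [div_le_iff₀ hab]; nlinarith
  have ha' : 0 < (1 + a) / (1 - a) := div_pos (by linarith) (by linarith)
  have hb' : 0 < (1 + b) / (1 - b) := div_pos (by linarith) (by linarith)
  have hab' : 1 + a * b - (a + b) ≠ 0 := by nlinarith
  rw [Real.artanh_eq_half_log ⟨ha₁.le, ha₂.le⟩, Real.artanh_eq_half_log ⟨hb₁.le, hb₂.le⟩,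
    Real.artanh_eq_half_log hs, ← mul_add, ← Real.log_mul ha'.ne' hb'.ne']
  congr 2
  rw [one_add_div hab.ne', one_sub_div hab.ne', div_div_div_cancel_right₀ hab.ne',
    div_mul_div_comm, div_eq_div_iff (by nlinarith) hab']
  ring

theorem Real.hasDerivAt_artanh {x : ℝ} (hx : x ∈ Ioo (-1) 1) :
    HasDerivAt Real.artanh (1 - x ^ 2)⁻¹ x := by
  obtain ⟨hx₁, hx₂⟩ := hx
  have hlog : HasDerivAt (fun y => 1 / 2 * (Real.log (1 + y) - Real.log (1 - y)))
      (1 / 2 * (1 / (1 + x) - (-1) / (1 - x))) x :=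
    ((((hasDerivAt_id x).const_add 1).log (by simp; linarith)).sub
      (((hasDerivAt_id x).const_sub 1).log (by simp; linarith))).const_mul _
  refine (hlog.congr_of_eventuallyEq ?_).congr_deriv ?_
  · filter_upwards [Ioo_mem_nhds hx₁ hx₂] with y ⟨hy₁, hy₂⟩
    rw [Real.artanh_eq_half_log ⟨hy₁.le, hy₂.le⟩, Real.log_div (by linarith) (by linarith)]
  · have : 1 + x ≠ 0 := by linarith
    have : 1 - x ≠ 0 := by linarith
    have : 1 - x ^ 2 ≠ 0 := by nlinarith
    field_simp
    ring

theorem artanh_norm_moebius_le {w z : ℂ} (hw : ‖w‖ < 1) (hz : ‖z‖ < 1) :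
    Real.artanh ‖moebius w z‖ ≤ Real.artanh ‖w‖ + Real.artanh ‖z‖ := by
  have ha := norm_nonneg w
  have hb := norm_nonneg z
  rw [Real.artanh_add ⟨by linarith, hw⟩ ⟨by linarith, hz⟩]
  refine Real.artanh_le_artanh (by linarith [norm_nonneg (moebius w z)]) ?_
    (norm_moebius_le hw hz)
  rw [div_lt_one (by positivity)]
  nlinarith [mul_pos (sub_pos.mpr hw) (sub_pos.mpr hz)]

noncomputable def moebiusDeriv (w z : ℂ) : ℂ := (conj w * w - 1) / (1 - conj w * z) ^ 2

theorem hasDerivAt_moebius {w z : ℂ} (hd : 1 - conj w * z ≠ 0) :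
    HasDerivAt (moebius w) (moebiusDeriv w z) z := by
  have h := ((hasDerivAt_id z).const_sub w).div
    (((hasDerivAt_id z).const_mul (conj w)).const_sub 1) hd
  exact h.congr_deriv (by simp only [moebiusDeriv, id]; ring)

theorem one_sub_sq_mul_norm_moebiusDeriv {w z : ℂ} (hw : ‖w‖ < 1) (hz : ‖z‖ < 1) :
    (1 - ‖z‖ ^ 2) * ‖moebiusDeriv w z‖ = 1 - ‖moebius w z‖ ^ 2 := by
  have hnum : ‖conj w * w - 1‖ = 1 - ‖w‖ ^ 2 := by
    rw [conj_mul', ← ofReal_pow, ← ofReal_one, ← ofReal_sub, norm_real, Real.norm_eq_abs,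
      abs_of_nonpos (by nlinarith [norm_nonneg w])]
    ring
  rw [moebiusDeriv, norm_div, norm_pow, hnum, one_sub_norm_moebius_sq hw hz]
  ring

theorem continuousOn_moebius_left {z : ℂ} (hz : ‖z‖ < 1) :
    ContinuousOn (fun w => moebius w z) (ball 0 1) :=
  (continuous_id.sub continuous_const).continuousOn.div
    (continuous_const.sub (continuous_conj.mul continuous_const)).continuousOn
    fun _ hw => one_sub_conj_mul_ne_zero (mem_ball_zero_iff.mp hw) hz

theorem continuousOn_moebiusDeriv_left {z : ℂ} (hz : ‖z‖ < 1) :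
    ContinuousOn (fun w => moebiusDeriv w z) (ball 0 1) :=
  ((continuous_conj.mul continuous_id).sub continuous_const).continuousOn.div
    ((continuous_const.sub (continuous_conj.mul continuous_const)).pow 2).continuousOn
    fun _ hw => pow_ne_zero 2 (one_sub_conj_mul_ne_zero (mem_ball_zero_iff.mp hw) hz)

section BlochBound

variable {f : ℂ → ℂ} {M : ℝ}

theorem nonneg_of_one_sub_sq_mul_norm_deriv_le
    (hM : ∀ x ∈ ball (0 : ℂ) 1, (1 - ‖x‖ ^ 2) * ‖deriv f x‖ ≤ M) : 0 ≤ M :=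
  (norm_nonneg _).trans (by simpa using hM 0 (mem_ball_self one_pos))

theorem norm_sub_apply_zero_le_mul_artanh (hf : DifferentiableOn ℂ f (ball 0 1))
    (hM : ∀ x ∈ ball (0 : ℂ) 1, (1 - ‖x‖ ^ 2) * ‖deriv f x‖ ≤ M)
    {z : ℂ} (hz : z ∈ ball (0 : ℂ) 1) :
    ‖f z - f 0‖ ≤ M * Real.artanh ‖z‖ := by
  set r := ‖z‖ with hr_def
  have hr : r < 1 := mem_ball_zero_iff.mp hz
  have hr₀ : 0 ≤ r := norm_nonneg z
  have hseg : ∀ t ∈ Icc (0 : ℝ) 1, (t : ℂ) * z ∈ ball (0 : ℂ) 1 := fun t ht => by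
    rw [mem_ball_zero_iff, norm_mul, norm_real, Real.norm_of_nonneg ht.1]
    nlinarith [ht.2]
  have hrt : ∀ t ∈ Icc (0 : ℝ) 1, r * t ∈ Ioo (-1) 1 := fun t ht =>
    ⟨by nlinarith [ht.1], by nlinarith [ht.2]⟩
  have hg : ∀ t ∈ Icc (0 : ℝ) 1,
      HasDerivAt (fun t : ℝ => f (t * z) - f 0) (deriv f (t * z) * z) t := fun t ht =>
    (((hf.differentiableAt (isOpen_ball.mem_nhds (hseg t ht))).hasDerivAt.comp (t : ℂ)
      (by simpa using (hasDerivAt_id (t : ℂ)).mul_const z)).comp_ofReal).sub_const _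
  have hB : ∀ t ∈ Icc (0 : ℝ) 1, HasDerivAt (fun t => M * Real.artanh (r * t))
      (M * ((1 - (r * t) ^ 2)⁻¹ * r)) t := fun t ht =>
    ((Real.hasDerivAt_artanh (hrt t ht)).comp t
      (by simpa using (hasDerivAt_id t).const_mul r)).const_mul M
  have hbound : ∀ t ∈ Ico (0 : ℝ) 1,
      ‖deriv f (t * z) * z‖ ≤ M * ((1 - (r * t) ^ 2)⁻¹ * r) := by
    intro t ht
    obtain ⟨hrt₁, hrt₂⟩ := hrt t (Ico_subset_Icc_self ht)
    have hpos : 0 < 1 - (r * t) ^ 2 := by nlinarith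
    have h := hM _ (hseg t (Ico_subset_Icc_self ht))
    rw [norm_mul, norm_real, Real.norm_of_nonneg ht.1, mul_comm t, ← hr_def] at h
    rw [norm_mul, ← hr_def, ← mul_assoc, ← div_eq_mul_inv]
    gcongr
    rwa [le_div_iff₀ hpos, mul_comm]
  simpa using image_norm_le_of_norm_deriv_right_le_deriv_boundary'
    (fun t ht => (hg t ht).continuousAt.continuousWithinAt)
    (fun t ht => (hg t (Ico_subset_Icc_self ht)).hasDerivWithinAt)
    (by simp) (fun t ht => (hB t ht).continuousAt.continuousWithinAt)
    (fun t ht => (hB t (Ico_subset_Icc_self ht)).hasDerivWithinAt) hbound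
    (right_mem_Icc.mpr zero_le_one)

theorem norm_le_add_mul_artanh (hf : DifferentiableOn ℂ f (ball 0 1))
    (hM : ∀ x ∈ ball (0 : ℂ) 1, (1 - ‖x‖ ^ 2) * ‖deriv f x‖ ≤ M)
    {z : ℂ} (hz : z ∈ ball (0 : ℂ) 1) :
    ‖f z‖ ≤ ‖f 0‖ + M * Real.artanh ‖z‖ := by
  linarith [norm_le_insert' (f z) (f 0), norm_sub_apply_zero_le_mul_artanh hf hM hz]

theorem norm_deriv_comp_moebius_mul_le
    (hM : ∀ x ∈ ball (0 : ℂ) 1, (1 - ‖x‖ ^ 2) * ‖deriv f x‖ ≤ M)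
    {w z : ℂ} (hw : ‖w‖ < 1) (hz : ‖z‖ < 1) :
    ‖deriv f (moebius w z) * moebiusDeriv w z‖ ≤ M / (1 - ‖z‖ ^ 2) := by
  have hz₂ : 0 < 1 - ‖z‖ ^ 2 := by nlinarith [norm_nonneg z]
  rw [le_div_iff₀ hz₂, norm_mul, mul_assoc, mul_comm ‖moebiusDeriv w z‖,
    one_sub_sq_mul_norm_moebiusDeriv hw hz, mul_comm]
  exact hM _ (mem_ball_zero_iff.mpr (norm_moebius_lt_one hw hz))

end BlochBound

section HausdorffOp

variable {μ : Measure ℂ} {K f : ℂ → ℂ} {M : ℝ}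

theorem integrable_norm_mul_artanh_norm (hK : Integrable K (μ.restrict (ball 0 1)))
    (hKlog : Integrable (fun w => K w * Real.log (1 - ‖w‖)) (μ.restrict (ball 0 1))) :
    Integrable (fun w => ‖K w‖ * Real.artanh ‖w‖) (μ.restrict (ball 0 1)) := by
  have hlog : Integrable (fun w => ‖K w‖ * Real.log (1 + ‖w‖)) (μ.restrict (ball 0 1)) := by
    refine hK.norm.mono' (hK.norm.aestronglyMeasurable.mul
      ((continuous_const.add continuous_norm).log fun w =>
        (by positivity : (0 : ℝ) < 1 + ‖w‖).ne').aestronglyMeasurable) ?_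
    filter_upwards [ae_restrict_mem measurableSet_ball] with w hw
    have hlog_le : Real.log (1 + ‖w‖) ≤ 1 := by
      linarith [Real.log_le_sub_one_of_pos (by positivity : 0 < 1 + ‖w‖),
        mem_ball_zero_iff.mp hw]
    rw [Real.norm_of_nonneg (mul_nonneg (norm_nonneg _) (Real.log_nonneg (by simp)))]
    exact mul_le_of_le_one_right (norm_nonneg _) hlog_le
  refine ((hlog.add hKlog.norm).const_mul (1 / 2)).congr ?_
  filter_upwards [ae_restrict_mem measurableSet_ball] with w hw
  have hw₁ := mem_ball_zero_iff.mp hw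
  have hw₀ := norm_nonneg w
  rw [Pi.add_apply, norm_mul, norm_real,
    Real.norm_of_nonpos (Real.log_nonpos (by linarith) (by linarith)),
    Real.artanh_eq_half_log ⟨by linarith, hw₁.le⟩, Real.log_div (by positivity) (by linarith)]
  ring

theorem aestronglyMeasurable_mul_comp_moebius
    (hK : AEStronglyMeasurable K (μ.restrict (ball 0 1))) (hf : ContinuousOn f (ball 0 1))
    {z : ℂ} (hz : z ∈ ball (0 : ℂ) 1) :
    AEStronglyMeasurable (fun w => K w * f (moebius w z)) (μ.restrict (ball 0 1)) :=
  hK.mul ((hf.comp (continuousOn_moebius_left (mem_ball_zero_iff.mp hz))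
    fun _ hw => moebius_mem_ball hw hz).aestronglyMeasurable measurableSet_ball)

theorem integrable_mul_comp_moebius (hK : Integrable K (μ.restrict (ball 0 1)))
    (hKA : Integrable (fun w => ‖K w‖ * Real.artanh ‖w‖) (μ.restrict (ball 0 1)))
    (hf : DifferentiableOn ℂ f (ball 0 1))
    (hM : ∀ x ∈ ball (0 : ℂ) 1, (1 - ‖x‖ ^ 2) * ‖deriv f x‖ ≤ M)
    {z : ℂ} (hz : z ∈ ball (0 : ℂ) 1) :
    Integrable (fun w => K w * f (moebius w z)) (μ.restrict (ball 0 1)) := by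
  have hM₀ := nonneg_of_one_sub_sq_mul_norm_deriv_le hM
  refine ((hK.norm.mul_const (‖f 0‖ + M * Real.artanh ‖z‖)).add (hKA.const_mul M)).mono'
    (aestronglyMeasurable_mul_comp_moebius hK.aestronglyMeasurable hf.continuousOn hz) ?_
  filter_upwards [ae_restrict_mem measurableSet_ball] with w hw
  have hgrowth := norm_le_add_mul_artanh hf hM (moebius_mem_ball hw hz)
  have htri := mul_le_mul_of_nonneg_left
    (artanh_norm_moebius_le (mem_ball_zero_iff.mp hw) (mem_ball_zero_iff.mp hz)) hM₀
  rw [norm_mul]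
  calc ‖K w‖ * ‖f (moebius w z)‖
      ≤ ‖K w‖ * (‖f 0‖ + M * (Real.artanh ‖w‖ + Real.artanh ‖z‖)) := by gcongr; linarith
    _ = _ := by simp only [Pi.add_apply]; ring

theorem hasDerivAt_hausdorffOp (hK : Integrable K (μ.restrict (ball 0 1)))
    (hKA : Integrable (fun w => ‖K w‖ * Real.artanh ‖w‖) (μ.restrict (ball 0 1)))
    (hf : DifferentiableOn ℂ f (ball 0 1))
    (hM : ∀ x ∈ ball (0 : ℂ) 1, (1 - ‖x‖ ^ 2) * ‖deriv f x‖ ≤ M)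
    {z₀ : ℂ} (hz₀ : z₀ ∈ ball (0 : ℂ) 1) :
    HasDerivAt (hausdorffOp μ K f)
      (∫ w in ball (0 : ℂ) 1, K w * (deriv f (moebius w z₀) * moebiusDeriv w z₀) ∂μ) z₀ := by
  have hz₀' := mem_ball_zero_iff.mp hz₀
  obtain ⟨r, hz₀r, hr⟩ := exists_between hz₀'
  have hr₂ : 0 < 1 - r ^ 2 := by nlinarith [norm_nonneg z₀]
  have hdf : ContinuousOn (deriv f) (ball 0 1) :=
    (hf.analyticOnNhd isOpen_ball).deriv.continuousOn
  refine (hasDerivAt_integral_of_dominated_loc_of_deriv_le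
    (F' := fun z w => K w * (deriv f (moebius w z) * moebiusDeriv w z))
    (bound := fun w => ‖K w‖ * (M / (1 - r ^ 2)))
    (isOpen_ball.mem_nhds (mem_ball_zero_iff.mpr hz₀r))
    (Filter.eventually_of_mem (isOpen_ball.mem_nhds hz₀) fun z hz =>
      aestronglyMeasurable_mul_comp_moebius hK.aestronglyMeasurable hf.continuousOn hz)
    (integrable_mul_comp_moebius hK hKA hf hM hz₀)
    (hK.aestronglyMeasurable.mul (((hdf.comp (continuousOn_moebius_left hz₀')
      fun _ hw => moebius_mem_ball hw hz₀).mul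
        (continuousOn_moebiusDeriv_left hz₀')).aestronglyMeasurable measurableSet_ball))
    ?_ (hK.norm.mul_const _) ?_).2
  · filter_upwards [ae_restrict_mem measurableSet_ball] with w hw z hz
    have hzr := mem_ball_zero_iff.mp hz
    rw [norm_mul]
    gcongr
    calc _ ≤ M / (1 - ‖z‖ ^ 2) :=
          norm_deriv_comp_moebius_mul_le hM (mem_ball_zero_iff.mp hw) (hzr.trans hr)
      _ ≤ M / (1 - r ^ 2) := by gcongr; exact nonneg_of_one_sub_sq_mul_norm_deriv_le hM
  · filter_upwards [ae_restrict_mem measurableSet_ball] with w hw z hz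
    have hz' := ball_subset_ball hr.le hz
    exact ((hf.differentiableAt (isOpen_ball.mem_nhds (moebius_mem_ball hw hz'))).hasDerivAt.comp
      z (hasDerivAt_moebius (one_sub_conj_mul_ne_zero (mem_ball_zero_iff.mp hw)
        (mem_ball_zero_iff.mp hz')))).const_mul (K w)

theorem one_sub_sq_mul_norm_deriv_hausdorffOp_le (hK : Integrable K (μ.restrict (ball 0 1)))
    (hKA : Integrable (fun w => ‖K w‖ * Real.artanh ‖w‖) (μ.restrict (ball 0 1)))
    (hf : DifferentiableOn ℂ f (ball 0 1))
    (hM : ∀ x ∈ ball (0 : ℂ) 1, (1 - ‖x‖ ^ 2) * ‖deriv f x‖ ≤ M)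
    {z : ℂ} (hz : z ∈ ball (0 : ℂ) 1) :
    (1 - ‖z‖ ^ 2) * ‖deriv (hausdorffOp μ K f) z‖ ≤ (∫ w in ball (0 : ℂ) 1, ‖K w‖ ∂μ) * M := by
  have hz₂ : 0 < 1 - ‖z‖ ^ 2 := by nlinarith [norm_nonneg z, mem_ball_zero_iff.mp hz]
  rw [(hasDerivAt_hausdorffOp hK hKA hf hM hz).deriv, ← le_div_iff₀' hz₂, mul_div_assoc,
    ← integral_mul_const]
  refine norm_integral_le_of_norm_le (hK.norm.mul_const _) ?_
  filter_upwards [ae_restrict_mem measurableSet_ball] with w hw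
  rw [norm_mul]
  exact mul_le_mul_of_nonneg_left (norm_deriv_comp_moebius_mul_le hM
    (mem_ball_zero_iff.mp hw) (mem_ball_zero_iff.mp hz)) (norm_nonneg _)

theorem norm_hausdorffOp_zero_le (hK : Integrable K (μ.restrict (ball 0 1)))
    (hKA : Integrable (fun w => ‖K w‖ * Real.artanh ‖w‖) (μ.restrict (ball 0 1)))
    (hf : DifferentiableOn ℂ f (ball 0 1))
    (hM : ∀ x ∈ ball (0 : ℂ) 1, (1 - ‖x‖ ^ 2) * ‖deriv f x‖ ≤ M) :
    ‖hausdorffOp μ K f 0‖ ≤ (∫ w in ball (0 : ℂ) 1, ‖K w‖ ∂μ) * ‖f 0‖ +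
      M * ∫ w in ball (0 : ℂ) 1, ‖K w‖ * Real.artanh ‖w‖ ∂μ := by
  rw [← integral_mul_const, ← integral_const_mul,
    ← integral_add (hK.norm.mul_const _) (hKA.const_mul M)]
  refine norm_integral_le_of_norm_le ((hK.norm.mul_const _).add (hKA.const_mul M)) ?_
  filter_upwards [ae_restrict_mem measurableSet_ball] with w hw
  rw [moebius_zero_right, norm_mul]
  calc ‖K w‖ * ‖f w‖ ≤ ‖K w‖ * (‖f 0‖ + M * Real.artanh ‖w‖) :=
        mul_le_mul_of_nonneg_left (norm_le_add_mul_artanh hf hM hw) (norm_nonneg _)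
    _ = _ := by ring

end HausdorffOp

theorem hausdorff_bounded_on_bloch (μ : Measure ℂ) (K : ℂ → ℂ)
    (hK : Integrable K (μ.restrict (ball (0:ℂ) 1)))
    (hKlog : Integrable (fun w => K w * Real.log (1 - ‖w‖)) (μ.restrict (ball (0:ℂ) 1)))
    (f : ℂ → ℂ) (hf : DifferentiableOn ℂ f (ball (0:ℂ) 1)) (hfB : BddAbove (blochSet f)) :
    DifferentiableOn ℂ (hausdorffOp μ K f) (ball (0:ℂ) 1) ∧
    BddAbove (blochSet (hausdorffOp μ K f)) ∧
    blochNorm' (hausdorffOp μ K f) ≤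
      (∫ w in ball (0:ℂ) 1,
          ‖K w‖ * (2 + (1 / 2) * Real.log ((1 + ‖w‖) / (1 - ‖w‖))) ∂μ) * blochNorm' f := by
  set M := sSup (blochSet f) with hM_def
  have hM : ∀ x ∈ ball (0 : ℂ) 1, (1 - ‖x‖ ^ 2) * ‖deriv f x‖ ≤ M :=
    fun x hx => le_csSup hfB ⟨x, hx, rfl⟩
  have hKA := integrable_norm_mul_artanh_norm hK hKlog
  have hbloch := fun z (hz : z ∈ ball (0 : ℂ) 1) =>
    one_sub_sq_mul_norm_deriv_hausdorffOp_le hK hKA hf hM hz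
  refine ⟨fun z hz => (hasDerivAt_hausdorffOp hK hKA hf hM hz).differentiableAt
    |>.differentiableWithinAt, ⟨_, forall_mem_image.mpr hbloch⟩, ?_⟩
  have hsup : sSup (blochSet (hausdorffOp μ K f)) ≤ _ :=
    csSup_le ((nonempty_ball.mpr one_pos).image _) (forall_mem_image.mpr hbloch)
  have hzero := norm_hausdorffOp_zero_le hK hKA hf hM
  have hweight : ∫ w in ball (0 : ℂ) 1,
      ‖K w‖ * (2 + (1 / 2) * Real.log ((1 + ‖w‖) / (1 - ‖w‖))) ∂μ =
      2 * (∫ w in ball (0 : ℂ) 1, ‖K w‖ ∂μ) +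
        ∫ w in ball (0 : ℂ) 1, ‖K w‖ * Real.artanh ‖w‖ ∂μ := by
    rw [← integral_const_mul, ← integral_add (hK.norm.const_mul 2) hKA]
    refine setIntegral_congr_fun measurableSet_ball fun w hw => ?_
    rw [Real.artanh_eq_half_log ⟨by linarith [norm_nonneg w], (mem_ball_zero_iff.mp hw).le⟩]
    ring
  have hM₀ := nonneg_of_one_sub_sq_mul_norm_deriv_le hM
  have hI : 0 ≤ ∫ w in ball (0 : ℂ) 1, ‖K w‖ ∂μ := integral_nonneg fun w => norm_nonneg _
  have hIA : 0 ≤ ∫ w in ball (0 : ℂ) 1, ‖K w‖ * Real.artanh ‖w‖ ∂μ :=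
    setIntegral_nonneg measurableSet_ball fun w _ =>
      mul_nonneg (norm_nonneg _) (Real.artanh_nonneg (norm_nonneg w))
  rw [hweight, blochNorm', blochNorm', ← hM_def]
  nlinarith [mul_nonneg hI hM₀, mul_nonneg hI (norm_nonneg (f 0)),
    mul_nonneg hIA (norm_nonneg (f 0))]
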